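/- Let V be a vector space with basis v_1,...,v_N over a field K containing an element q with q not a root of unity, and define the linear map R on V⊗V by R(v_i⊗v_j) = q^{δ_{ij}} v_j⊗v_i + θ(j-i)(q−q^{-1}) v_i⊗v_j, where θ(n)=1 if n>0 and 0 otherwise. Then R satisfies the braid equation: (R⊗id)(id⊗R)(R⊗id) = (id⊗R)(R⊗id)(id⊗R) on V⊗V⊗V. -/

import Mathlib

/-
`R` is the case `a = q`, `c = q - q⁻¹` of the R-matrix `R(vᵢ ⊗ vᵢ) = a vᵢ ⊗ vᵢ`,
`R(vᵢ ⊗ vⱼ) = vⱼ ⊗ vᵢ + [i < j] c vᵢ ⊗ vⱼ` (`i ≠ j`), which makes sense for any linearly ordered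
basis. Evaluated on `vᵢ ⊗ vⱼ ⊗ vₖ`, both sides of the braid equation depend only on the relative
order of `i, j, k`; in each case their coefficients agree identically in `a, c`, except for the
triples `(i, i, k)` and `(i, k, k)` with `i < k`, where they differ by `c (a² - a c - 1)`. This
vanishes for `a = q`, `c = q - q⁻¹`, also at `q = 0`, where `c = 0`.
-/

open TensorProduct

noncomputable section

variable (K : Type) [Field K]

/-- The operator `f ⊗ id` on the first two factors of `M ⊗ (M ⊗ M)`. -/
def op1 {M : Type} [AddCommGroup M] [Module K M]
    (f : M ⊗[K] M →ₗ[K] M ⊗[K] M) : M ⊗[K] (M ⊗[K] M) →ₗ[K] M ⊗[K] (M ⊗[K] M) :=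
  (TensorProduct.assoc K M M M).toLinearMap ∘ₗ (LinearMap.rTensor M f) ∘ₗ
    (TensorProduct.assoc K M M M).symm.toLinearMap

/-- The operator `id ⊗ f` on the last two factors of `M ⊗ (M ⊗ M)`. -/
def op2 {M : Type} [AddCommGroup M] [Module K M]
    (f : M ⊗[K] M →ₗ[K] M ⊗[K] M) : M ⊗[K] (M ⊗[K] M) →ₗ[K] M ⊗[K] (M ⊗[K] M) :=
  LinearMap.lTensor M f

variable (N : ℕ) (q : K)

/-- Standard basis of `V = K^N`. -/
def vb : Module.Basis (Fin N) K (Fin N → K) := Pi.basisFun K (Fin N)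

/-- `R(v_i ⊗ v_j) = q^{δ_{ij}} v_j ⊗ v_i + θ(j-i)(q - q⁻¹) v_i ⊗ v_j`. -/
def Rmap : (Fin N → K) ⊗[K] (Fin N → K) →ₗ[K] (Fin N → K) ⊗[K] (Fin N → K) :=
  ((vb K N).tensorProduct (vb K N)).constr K fun p =>
    (if p.1 = p.2 then q else 1) • (vb K N p.2 ⊗ₜ[K] vb K N p.1) +
    (if (p.1 : ℕ) < (p.2 : ℕ) then q - q⁻¹ else 0) • (vb K N p.1 ⊗ₜ[K] vb K N p.2)

section Hecke

variable {K} {M : Type} [AddCommGroup M] [Module K M]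

lemma op1_tmul_tmul (f : M ⊗[K] M →ₗ[K] M ⊗[K] M) (x y z : M) :
    op1 K f (x ⊗ₜ (y ⊗ₜ z)) = TensorProduct.assoc K M M M (f (x ⊗ₜ y) ⊗ₜ z) := by
  simp [op1]

lemma op2_tmul (f : M ⊗[K] M →ₗ[K] M ⊗[K] M) (x : M) (y : M ⊗[K] M) :
    op2 K f (x ⊗ₜ y) = x ⊗ₜ f y :=
  rfl

variable {ι : Type*} [LinearOrder ι] (b : Module.Basis ι K M) (a c : K)

def heckeR : M ⊗[K] M →ₗ[K] M ⊗[K] M :=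
  (b.tensorProduct b).constr K fun p =>
    (if p.1 = p.2 then a else 1) • (b p.2 ⊗ₜ[K] b p.1) +
    (if p.1 < p.2 then c else 0) • (b p.1 ⊗ₜ[K] b p.2)

lemma heckeR_tmul (i j : ι) :
    heckeR b a c (b i ⊗ₜ b j) =
      (if i = j then a else 1) • (b j ⊗ₜ[K] b i) + (if i < j then c else 0) • (b i ⊗ₜ[K] b j) := by
  rw [heckeR, ← Module.Basis.tensorProduct_apply, Module.Basis.constr_basis]
  simp only [Module.Basis.tensorProduct_apply]

lemma op1_heckeR_tmul_tmul (i j k : ι) :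
    op1 K (heckeR b a c) (b i ⊗ₜ (b j ⊗ₜ b k)) =
      (if i = j then a else 1) • (b j ⊗ₜ (b i ⊗ₜ[K] b k)) +
        (if i < j then c else 0) • (b i ⊗ₜ (b j ⊗ₜ[K] b k)) := by
  simp only [op1_tmul_tmul, heckeR_tmul, add_tmul, smul_tmul', map_add, assoc_tmul]

lemma op2_heckeR_tmul_tmul (i j k : ι) :
    op2 K (heckeR b a c) (b i ⊗ₜ (b j ⊗ₜ b k)) =
      (if j = k then a else 1) • (b i ⊗ₜ (b k ⊗ₜ[K] b j)) +
        (if j < k then c else 0) • (b i ⊗ₜ (b j ⊗ₜ[K] b k)) := by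
  simp only [op2_tmul, heckeR_tmul, tmul_add, tmul_smul]

-- `h` is `c` times the Hecke relation `a² = a c + 1`, i.e. `R² = c R + 1`.
lemma heckeR_braid_tmul (h : c * a ^ 2 = c * (a * c + 1)) (i j k : ι) :
    op1 K (heckeR b a c) (op2 K (heckeR b a c) (op1 K (heckeR b a c) (b i ⊗ₜ (b j ⊗ₜ b k)))) =
      op2 K (heckeR b a c) (op1 K (heckeR b a c) (op2 K (heckeR b a c) (b i ⊗ₜ (b j ⊗ₜ b k)))) := by
  simp only [op1_heckeR_tmul_tmul, op2_heckeR_tmul_tmul, map_add, map_smul, smul_add, smul_smul]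
  rcases eq_or_ne i j with hij | hij <;> rcases eq_or_ne j k with hjk | hjk <;>
    rcases eq_or_ne i k with hik | hik <;> subst_vars <;> split_ifs <;> first
    | (exfalso; grind)
    | (match_scalars <;> first | ring1 | linear_combination h | linear_combination -h)

theorem heckeR_braid (h : c * a ^ 2 = c * (a * c + 1)) :
    op1 K (heckeR b a c) ∘ₗ op2 K (heckeR b a c) ∘ₗ op1 K (heckeR b a c) =
      op2 K (heckeR b a c) ∘ₗ op1 K (heckeR b a c) ∘ₗ op2 K (heckeR b a c) := by
  refine (b.tensorProduct (b.tensorProduct b)).ext ?_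
  rintro ⟨i, j, k⟩
  simpa only [Module.Basis.tensorProduct_apply, LinearMap.comp_apply] using
    heckeR_braid_tmul b a c h i j k

end Hecke

lemma Rmap_eq_heckeR : Rmap K N q = heckeR (vb K N) q (q - q⁻¹) :=
  rfl

theorem Rmap_braid :
    op1 K (Rmap K N q) ∘ₗ op2 K (Rmap K N q) ∘ₗ op1 K (Rmap K N q) =
      op2 K (Rmap K N q) ∘ₗ op1 K (Rmap K N q) ∘ₗ op2 K (Rmap K N q) := by
  have hecke : (q - q⁻¹) * q ^ 2 = (q - q⁻¹) * (q * (q - q⁻¹) + 1) := by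
    rcases eq_or_ne q 0 with rfl | hq
    · simp
    · field_simp
      ring
  rw [Rmap_eq_heckeR]
  exact heckeR_braid (vb K N) q (q - q⁻¹) hecke

end
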